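/- Let ℋ = ℂ²⊗ℂ²⊗ℂ²⊗ℂ² with the action of Ĝ = SL(2,ℂ)⁴, and let u₁ = e₀₀₀₀+e₁₁₁₁ and u₄ = e₀₀₁₁+e₁₁₀₀. Let λ ∈ ℂ with λ ≠ 0, and set Z° = {(A^#, A, B^#, B) : A, B ∈ SL(2,ℂ)}, where for A = [[a,b],[c,d]] one sets A^# = [[d,c],[b,a]]. Then the stabiliser in Ĝ of s = λ(u₁−u₄) equals Z° ∪ (−I,I,−I,I)·Z°. -/

import Mathlib

/-- The Hilbert space of four qubits, in coordinates with respect to the basis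
`e_{i₁i₂i₃i₄} = e_{i₁} ⊗ e_{i₂} ⊗ e_{i₃} ⊗ e_{i₄}` of `ℂ² ⊗ ℂ² ⊗ ℂ² ⊗ ℂ²`. -/
abbrev H4 : Type := Fin 2 → Fin 2 → Fin 2 → Fin 2 → ℂ

abbrev SL2 := Matrix.SpecialLinearGroup (Fin 2) ℂ

/-- The group `Ĝ = SL(2,ℂ)⁴`. -/
abbrev G4 := SL2 × SL2 × SL2 × SL2

/-- The action of `SL(2,ℂ)⁴` on `ℂ² ⊗ ℂ² ⊗ ℂ² ⊗ ℂ²`, given in coordinates: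
it is the linear extension of `(A,B,C,D)·(v₁⊗v₂⊗v₃⊗v₄) = Av₁⊗Bv₂⊗Cv₃⊗Dv₄`. -/
noncomputable def act (g : G4) (x : H4) : H4 := fun i1 i2 i3 i4 =>
  ∑ j1 : Fin 2, ∑ j2 : Fin 2, ∑ j3 : Fin 2, ∑ j4 : Fin 2,
    g.1 i1 j1 * g.2.1 i2 j2 * g.2.2.1 i3 j3 * g.2.2.2 i4 j4 * x j1 j2 j3 j4

/-- The basis vector `e_{i₁i₂i₃i₄}`. -/
def e (i1 i2 i3 i4 : Fin 2) : H4 := fun j1 j2 j3 j4 =>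
  if j1 = i1 ∧ j2 = i2 ∧ j3 = i3 ∧ j4 = i4 then 1 else 0

noncomputable def u1 : H4 := e 0 0 0 0 + e 1 1 1 1
noncomputable def u4 : H4 := e 0 0 1 1 + e 1 1 0 0

/-- For `A = [[a,b],[c,d]]`, `A^# = [[d,c],[b,a]]`. -/
noncomputable def sharp (A : SL2) : SL2 :=
  ⟨!![A.1 1 1, A.1 1 0; A.1 0 1, A.1 0 0], by
    have h := A.2
    rw [Matrix.det_fin_two] at h
    rw [Matrix.det_fin_two_of]
    linear_combination h⟩

noncomputable def negI : SL2 := ⟨!![-1, 0; 0, -1], by norm_num [Matrix.det_fin_two_of]⟩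

/-- The identity component `Z° = {(A^#, A, B^#, B) : A, B ∈ SL(2,ℂ)}`. -/
noncomputable def Z0 : Set G4 := {g : G4 | ∃ A B : SL2, g = (sharp A, A, sharp B, B)}

/-!
Write `u₁ - u₄ = w ⊗ w`, where `w = e₀ ⊗ e₀ - e₁ ⊗ e₁` has coefficient matrix `W = diag(1, -1)`;
a pair `(A, B)` acts on 2-tensors by `X ↦ A X Bᵀ`. A product tensor determines its factors up to
reciprocal scalars, so `(M, N, P, Q)` fixes `λ (w ⊗ w)` iff `M W Nᵀ = t W` and `t (P W Qᵀ) = W`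
for some `t`. Since `N^# W Nᵀ = W` with `W Nᵀ` invertible, the first equation says `M = t N^#`;
taking determinants gives `t = ±1`, hence `t⁻¹ = t` and likewise `P = t Q^#`.
-/

open Matrix

local notation "Mat" => Matrix (Fin 2) (Fin 2) ℂ

def diagOneNegOne : Mat := !![1, 0; 0, -1]

lemma act_smul (g : G4) (c : ℂ) (x : H4) : act g (c • x) = c • act g x := by
  funext i1 i2 i3 i4
  simp only [act, Pi.smul_apply, smul_eq_mul, Fin.sum_univ_two]
  ring

lemma act_tensor (M N P Q : SL2) (X Y : Mat) :
    act (M, N, P, Q) (fun i j k l => X i j * Y k l) =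
      fun i j k l => ((M : Mat) * X * (N : Mat)ᵀ) i j * ((P : Mat) * Y * (Q : Mat)ᵀ) k l := by
  funext i j k l
  simp only [act, mul_apply, transpose_apply, Fin.sum_univ_two]
  ring

lemma u1_sub_u4_eq_tensor :
    u1 - u4 = fun i j k l => diagOneNegOne i j * diagOneNegOne k l := by
  funext i j k l
  fin_cases i <;> fin_cases j <;> fin_cases k <;> fin_cases l <;> simp [u1, u4, e, diagOneNegOne]

lemma exists_smul_of_tensor_eq {K m n p q : Type*} [Field K] {X X' : Matrix m n K}
    {Y Y' : Matrix p q K} (h : ∀ i j k l, X i j * Y k l = X' i j * Y' k l)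
    {i₀ : m} {j₀ : n} {k₀ : p} {l₀ : q} (h₀ : X' i₀ j₀ * Y' k₀ l₀ ≠ 0) :
    ∃ t : K, X = t • X' ∧ t • Y = Y' := by
  have hY : Y k₀ l₀ ≠ 0 := right_ne_zero_of_mul (h i₀ j₀ k₀ l₀ ▸ h₀)
  set t := Y' k₀ l₀ / Y k₀ l₀
  have hX : X = t • X' := by
    ext i j
    rw [Matrix.smul_apply, smul_eq_mul, div_mul_eq_mul_div, eq_div_iff hY]
    linear_combination h i j k₀ l₀
  refine ⟨t, hX, ?_⟩
  ext k l
  have := h i₀ j₀ k l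
  rw [hX, Matrix.smul_apply, smul_eq_mul] at this
  rw [Matrix.smul_apply, smul_eq_mul]
  exact mul_left_cancel₀ (left_ne_zero_of_mul h₀) (by linear_combination this)

lemma sharp_mul_mul_transpose (A : SL2) :
    (sharp A : Mat) * diagOneNegOne * (A : Mat)ᵀ = diagOneNegOne := by
  have hA := A.2
  rw [det_fin_two] at hA
  ext i j
  fin_cases i <;> fin_cases j <;> simp [sharp, diagOneNegOne, mul_apply, Fin.sum_univ_two] <;> grind

lemma mul_mul_transpose_eq_smul_iff (M N : SL2) (t : ℂ) :
    (M : Mat) * diagOneNegOne * (N : Mat)ᵀ = t • diagOneNegOne ↔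
      (M : Mat) = t • (sharp N : Mat) := by
  have hunit : IsUnit (diagOneNegOne * (N : Mat)ᵀ) := by
    rw [isUnit_iff_isUnit_det, det_mul, det_transpose, N.2]
    simp [diagOneNegOne, det_fin_two]
  calc _ ↔ (M : Mat) * (diagOneNegOne * (N : Mat)ᵀ) =
          (t • (sharp N : Mat)) * (diagOneNegOne * (N : Mat)ᵀ) := by
        rw [smul_mul, ← Matrix.mul_assoc, ← Matrix.mul_assoc, sharp_mul_mul_transpose]
    _ ↔ _ := hunit.mul_left_inj

lemma eq_one_or_eq_neg_one_of_coe_eq_smul {M A : SL2} {t : ℂ} (h : (M : Mat) = t • (A : Mat)) :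
    t = 1 ∨ t = -1 := by
  rw [← sq_eq_one_iff]
  simpa [eq_comm] using congrArg det h

lemma act_u1_sub_u4_eq_iff (M N P Q : SL2) :
    act (M, N, P, Q) (u1 - u4) = u1 - u4 ↔
      ∃ t : ℂ, (t = 1 ∨ t = -1) ∧ (M : Mat) = t • (sharp N : Mat) ∧
        (P : Mat) = t • (sharp Q : Mat) := by
  rw [u1_sub_u4_eq_tensor, act_tensor]
  constructor
  · intro h
    simp only [funext_iff] at h
    obtain ⟨t, hMN, hPQ⟩ := exists_smul_of_tensor_eq h (i₀ := 0) (j₀ := 0) (k₀ := 0) (l₀ := 0)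
      (by simp [diagOneNegOne])
    rw [mul_mul_transpose_eq_smul_iff] at hMN
    have ht := eq_one_or_eq_neg_one_of_coe_eq_smul hMN
    have htt : t * t = 1 := by rcases ht with rfl | rfl <;> norm_num
    have hPQ' : (P : Mat) * diagOneNegOne * (Q : Mat)ᵀ = t • diagOneNegOne := by
      conv_rhs => rw [← hPQ, smul_smul, htt, one_smul]
    exact ⟨t, ht, hMN, (mul_mul_transpose_eq_smul_iff P Q t).mp hPQ'⟩
  · rintro ⟨t, ht, hMN, hPQ⟩
    rw [← mul_mul_transpose_eq_smul_iff] at hMN hPQ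
    rw [hMN, hPQ]
    funext i j k l
    simp only [Matrix.smul_apply, smul_eq_mul]
    rcases ht with rfl | rfl <;> ring

lemma coe_negI_mul (A : SL2) : ((negI * A : SL2) : Mat) = (-1 : ℂ) • (A : Mat) := by
  change (negI : Mat) * A = _
  ext i j
  fin_cases i <;> simp [negI, mul_apply]

lemma mem_Z0_union_iff (M N P Q : SL2) :
    (M, N, P, Q) ∈ Z0 ∪ (fun t : G4 => (negI, 1, negI, 1) * t) '' Z0 ↔
      ∃ t : ℂ, (t = 1 ∨ t = -1) ∧ (M : Mat) = t • (sharp N : Mat) ∧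
        (P : Mat) = t • (sharp Q : Mat) := by
  constructor
  · rintro (⟨A, B, h⟩ | ⟨_, ⟨A, B, rfl⟩, h⟩)
    · simp only [Prod.mk.injEq] at h
      obtain ⟨rfl, rfl, rfl, rfl⟩ := h
      exact ⟨1, Or.inl rfl, (one_smul _ _).symm, (one_smul _ _).symm⟩
    · simp only [Prod.mk_mul_mk, one_mul, Prod.mk.injEq] at h
      obtain ⟨rfl, rfl, rfl, rfl⟩ := h
      exact ⟨-1, Or.inr rfl, coe_negI_mul _, coe_negI_mul _⟩
  · rintro ⟨t, rfl | rfl, hM, hP⟩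
    · rw [one_smul] at hM hP
      exact Or.inl ⟨N, Q, by rw [Subtype.coe_injective hM, Subtype.coe_injective hP]⟩
    · rw [← coe_negI_mul] at hM hP
      refine Or.inr ⟨_, ⟨N, Q, rfl⟩, ?_⟩
      simp only [Prod.mk_mul_mk, one_mul, Subtype.coe_injective hM, Subtype.coe_injective hP]

/-- The stabiliser of `s = λ(u₁ - u₄)` in `SL(2,ℂ)⁴` equals
`Z° ∪ (-I,I,-I,I)·Z°`. -/
theorem stabiliser_semisimple_A3 (lam : ℂ) (hlam : lam ≠ 0) :
    {g : G4 | act g (lam • (u1 - u4)) = lam • (u1 - u4)} =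
      Z0 ∪ (fun t : G4 => (negI, 1, negI, 1) * t) '' Z0 := by
  ext ⟨M, N, P, Q⟩
  rw [Set.mem_ofPred_eq, act_smul, (smul_right_injective H4 hlam).eq_iff, act_u1_sub_u4_eq_iff,
    mem_Z0_union_iff]
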